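/- Let Γ be a finite graph with vertex set V = {a₀, …, a_{n-1}}. Define the sequence u_{2ni+2j} = a_j^{4^i} and u_{2ni+2j+1} = a_j^{-2·4^i} for i ≥ 0, 0 ≤ j < n, and the sequence of subsets U₀ = V, U_{k+1} = (U_k ∪ U_k^{u_k}) △ {u_k, u_k^{-2}} ⊆ A(Γ). Then for every k ≥ 0, u_k ∈ U_k. -/

import Mathlib

/-!
Each `u_k` is `a_j ^ (-2) ^ t`, where `t` counts the earlier terms that are powers of `a_j`.
By induction on `k`: the only pure power of `a_m` in `U_k` is `a_m ^ (-2) ^ c_m`, where `c_m`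
counts the terms before `u_k` that are powers of `a_m`, and every element of `U_k` is a conjugate
`g⁻¹ a_m^e g` with `|expSum_i g| < 2 ^ c_i` for all `i`. The symmetric difference trades
`a_j ^ (-2) ^ c_j` for `a_j ^ (-2) ^ (c_j + 1)` as long as conjugating by `u_k` creates no new
pure power. It cannot: `g u_k` would centralise some `a_m^e` with `a_j` outside the star of
`a_m`, and mapping `A(Γ)` to `ℤ ≀ ℤ` (`a_j` to a lamp, `a_m` to the shift) shows that such a
centraliser has `a_j`-exponent sum `0`, while `expSum_j (g u_k) = expSum_j g + (-2) ^ c_j ≠ 0`.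
-/

open scoped commutatorElement

/-- The set of commutator relations of a right-angled Artin group on a graph. -/
def raagRels {α : Type*} (Γ : SimpleGraph α) : Set (FreeGroup α) :=
  {r | ∃ u v : α, Γ.Adj u v ∧ r = ⁅FreeGroup.of u, FreeGroup.of v⁆}

/-- The right-angled Artin group on the graph `Γ`. -/
def Raag {α : Type*} (Γ : SimpleGraph α) : Type _ := PresentedGroup (raagRels Γ)

instance {α : Type*} (Γ : SimpleGraph α) : Group (Raag Γ) :=
  inferInstanceAs (Group (PresentedGroup (raagRels Γ)))

/-- The standard generator of `Raag Γ` corresponding to a vertex. -/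
def Raag.of {α : Type*} (Γ : SimpleGraph α) (v : α) : Raag Γ := PresentedGroup.of v

/-- The commutation graph of a subset `X` of a group `G`. -/
def commGraph (G : Type*) [Group G] (X : Set G) : SimpleGraph X where
  Adj x y := x ≠ y ∧ Commute x.1 y.1
  symm := ⟨fun _ _ ⟨h1, h2⟩ => ⟨h1.symm, h2.symm⟩⟩
  loopless := ⟨fun _ ⟨h1, _⟩ => h1 rfl⟩

/-- The natural homomorphism `A(CG(X)) → G` extending the identity on `X`. -/
def natHom (G : Type*) [Group G] (X : Set G) : Raag (commGraph G X) →* G :=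
  PresentedGroup.toGroup (f := Subtype.val) (by
    rintro r ⟨u, v, hadj, rfl⟩
    rw [map_commutatorElement]
    simp only [FreeGroup.lift_apply_of]
    exact commutatorElement_eq_one_iff_commute.mpr hadj.2)

/-- The star of a vertex: vertices equal or adjacent to `v`. -/
def starSet {α : Type*} (Γ : SimpleGraph α) (v : α) : Set α := {w | w = v ∨ Γ.Adj v w}

/-- The link of a vertex: vertices adjacent to `v`. -/
def linkSet {α : Type*} (Γ : SimpleGraph α) (v : α) : Set α := {w | Γ.Adj v w}

/-- The double of a graph `X` along the star of a vertex `v`: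
two copies of the complement of the star, glued along the star. -/
def doubleStar {α : Type*} (X : SimpleGraph α) (v : α) :
    SimpleGraph ((Fin 2 × {w : α // w ∉ starSet X v}) ⊕ {w : α // w ∈ starSet X v}) where
  Adj a b :=
    match a, b with
    | .inl (i, x), .inl (j, y) => i = j ∧ X.Adj x.1 y.1
    | .inl (_, x), .inr y => X.Adj x.1 y.1
    | .inr x, .inl (_, y) => X.Adj x.1 y.1
    | .inr x, .inr y => X.Adj x.1 y.1
  symm := by
    refine ⟨?_⟩
    rintro (⟨i, x⟩ | x) (⟨j, y⟩ | y) h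
    · exact ⟨h.1.symm, h.2.symm⟩
    · exact h.symm
    · exact h.symm
    · exact h.symm
  loopless := by
    refine ⟨?_⟩
    rintro (⟨i, x⟩ | x) h
    · exact X.loopless.irrefl _ h.2
    · exact X.loopless.irrefl _ h

/-- The group element represented by a word (a list of letters with signs). -/
def wprod {α : Type*} (Γ : SimpleGraph α) (l : List (α × Bool)) : Raag Γ :=
  (l.map fun p => if p.2 then Raag.of Γ p.1 else (Raag.of Γ p.1)⁻¹).prod

/-- The word length of an element of `Raag Γ` with respect to the vertex generators. -/
noncomputable def wordLength {α : Type*} (Γ : SimpleGraph α) (w : Raag Γ) : ℕ :=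
  sInf {n | ∃ l : List (α × Bool), l.length = n ∧ wprod Γ l = w}

/-- A word is reduced if its length realizes the word length of the element it represents. -/
def WordReduced {α : Type*} (Γ : SimpleGraph α) (l : List (α × Bool)) : Prop :=
  l.length = wordLength Γ (wprod Γ l)

/-- The right-counting vector of a word: `rcv Γ l i` is the minimal word length of `y`
such that the suffix of `l` from position `i` equals `x * sᵢ^{eᵢ} * y` with `x` in the
subgroup generated by the link of `sᵢ`. -/
noncomputable def rcv {α : Type*} (Γ : SimpleGraph α) (l : List (α × Bool))
    (i : Fin l.length) : ℕ :=
  sInf {m | ∃ x y : Raag Γ,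
    x ∈ Subgroup.closure (Raag.of Γ '' linkSet Γ (l.get i).1) ∧
    wordLength Γ y = m ∧
    wprod Γ (l.drop i) = x * wprod Γ [l.get i] * y}

/-- The exponent used by the inflating map `σ` at position `i` of the word `l`. -/
noncomputable def sigmaExp {α : Type*} (Γ : SimpleGraph α) (M : ℕ) (l : List (α × Bool))
    (i : Fin l.length) : ℤ :=
  if (l.get i).2 then (4 : ℤ) ^ (M - 1 - rcv Γ l i)
  else -2 * (4 : ℤ) ^ (M - 1 - rcv Γ l i)

/-- The inflating map `σ` applied to a word `l`, as an element of `Raag Γ`. -/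
noncomputable def sigmaProd {α : Type*} (Γ : SimpleGraph α) (M : ℕ)
    (l : List (α × Bool)) : Raag Γ :=
  (List.ofFn fun i : Fin l.length => (Raag.of Γ (l.get i).1) ^ (sigmaExp Γ M l i)).prod

section UniversalSequence

variable {n : ℕ} (Γ : SimpleGraph (Fin n))

/-- The hypotheses defining the universal sequence `{(u_k, U_k)}`:
`u_{2ni+2j} = a_j^{4^i}`, `u_{2ni+2j+1} = a_j^{-2·4^i}`, `U₀ = V`,
`U_{k+1} = (U_k ∪ U_k^{u_k}) △ {u_k, u_k⁻²}`. -/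
def IsUniversalSequence (u : ℕ → Raag Γ) (U : ℕ → Set (Raag Γ)) : Prop :=
  (∀ (i : ℕ) (j : Fin n), u (2 * n * i + 2 * (j : ℕ)) = (Raag.of Γ j) ^ ((4 : ℤ) ^ i)) ∧
  (∀ (i : ℕ) (j : Fin n),
      u (2 * n * i + 2 * (j : ℕ) + 1) = (Raag.of Γ j) ^ (-(2 * (4 : ℤ) ^ i))) ∧
  U 0 = Set.range (Raag.of Γ) ∧
  ∀ k, U (k + 1) =
    symmDiff (U k ∪ (fun x => (u k)⁻¹ * x * u k) '' U k) {u k, (u k) ^ (-2 : ℤ)}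

end UniversalSequence

/-- `ℤ[T, T⁻¹] ⋊ ℤ`, with `ℤ` acting by multiplication by powers of `T`; this is `ℤ ≀ ℤ`. -/
@[ext]
structure ZWreathZ where
  lamps : LaurentPolynomial ℤ
  shift : ℤ

namespace ZWreathZ

open LaurentPolynomial

noncomputable instance : Mul ZWreathZ :=
  ⟨fun x y => ⟨x.lamps + T x.shift * y.lamps, x.shift + y.shift⟩⟩

noncomputable instance : One ZWreathZ := ⟨⟨0, 0⟩⟩

noncomputable instance : Inv ZWreathZ := ⟨fun x => ⟨-(T (-x.shift) * x.lamps), -x.shift⟩⟩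

theorem mul_lamps (x y : ZWreathZ) : (x * y).lamps = x.lamps + T x.shift * y.lamps := rfl

theorem mul_shift (x y : ZWreathZ) : (x * y).shift = x.shift + y.shift := rfl

theorem one_lamps : (1 : ZWreathZ).lamps = 0 := rfl

theorem one_shift : (1 : ZWreathZ).shift = 0 := rfl

theorem inv_lamps (x : ZWreathZ) : x⁻¹.lamps = -(T (-x.shift) * x.lamps) := rfl

theorem inv_shift (x : ZWreathZ) : x⁻¹.shift = -x.shift := rfl

noncomputable instance : Group ZWreathZ :=
  Group.ofLeftAxioms
    (fun x y z => ZWreathZ.ext (by simp only [mul_lamps, mul_shift, T_add]; ring)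
      (add_assoc _ _ _))
    (fun x => ZWreathZ.ext (by simp [mul_lamps, one_lamps, one_shift]) (zero_add _))
    (fun x => ZWreathZ.ext (by simp [mul_lamps, inv_lamps, inv_shift]; rfl)
      (neg_add_cancel _))

noncomputable def ofShift : Multiplicative ℤ →* ZWreathZ where
  toFun a := ⟨0, a.toAdd⟩
  map_one' := rfl
  map_mul' a b := by ext <;> simp [mul_lamps, mul_shift]

theorem lamps_eq_zero_of_commute {x : ZWreathZ} {a : ℤ} (ha : a ≠ 0)
    (h : Commute x (ofShift (.ofAdd a))) : x.lamps = 0 := by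
  have hx : x.lamps = T a * x.lamps := by simpa [mul_lamps, ofShift] using congrArg lamps h.eq
  have hT : (1 - T a : LaurentPolynomial ℤ) ≠ 0 := by
    rw [sub_ne_zero, ← T_zero, Ne, eq_comm]
    exact fun h => ha ((AddMonoidAlgebra.single_left_inj one_ne_zero).mp h)
  refine (mul_eq_zero.mp ?_).resolve_left hT
  rw [sub_mul, one_mul, ← hx, sub_self]

noncomputable def lampSum : ZWreathZ →* Multiplicative ℤ where
  toFun x := .ofAdd (eval₂ (RingHom.id ℤ) 1 x.lamps)
  map_one' := by simp [one_lamps]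
  map_mul' x y := by simp [mul_lamps]

end ZWreathZ

namespace Raag

variable {α : Type*} (Γ : SimpleGraph α)

def lift {G : Type*} [Group G] (f : α → G) (hf : ∀ u v, Γ.Adj u v → Commute (f u) (f v)) :
    Raag Γ →* G :=
  PresentedGroup.toGroup (f := f) (by
    rintro r ⟨u, v, huv, rfl⟩
    rw [map_commutatorElement, FreeGroup.lift_apply_of, FreeGroup.lift_apply_of]
    exact commutatorElement_eq_one_iff_commute.mpr (hf u v huv))

@[simp]
theorem lift_of {G : Type*} [Group G] (f : α → G)
    (hf : ∀ u v, Γ.Adj u v → Commute (f u) (f v)) (v : α) : lift Γ f hf (of Γ v) = f v :=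
  PresentedGroup.toGroup.of _

theorem hom_ext {G : Type*} [Group G] {φ ψ : Raag Γ →* G} (h : ∀ v, φ (of Γ v) = ψ (of Γ v)) :
    φ = ψ :=
  PresentedGroup.ext h

variable {Γ}

theorem commute_of_adj {u v : α} (h : Γ.Adj u v) : Commute (of Γ u) (of Γ v) := by
  have h1 : (PresentedGroup.mk (raagRels Γ)) ⁅FreeGroup.of u, FreeGroup.of v⁆ = 1 :=
    (QuotientGroup.eq_one_iff _).mpr (Subgroup.subset_normalClosure ⟨u, v, h, rfl⟩)
  rw [map_commutatorElement] at h1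
  exact commutatorElement_eq_one_iff_commute.mp h1

variable [DecidableEq α]

def expSumHom (j : α) : Raag Γ →* Multiplicative ℤ :=
  lift Γ (fun v => .ofAdd (if v = j then 1 else 0)) fun _ _ _ => Commute.all _ _

def expSum (j : α) (x : Raag Γ) : ℤ := (expSumHom j x).toAdd

@[simp]
theorem expSum_one (j : α) : expSum j (1 : Raag Γ) = 0 := by simp [expSum]

@[simp]
theorem expSum_mul (j : α) (x y : Raag Γ) : expSum j (x * y) = expSum j x + expSum j y := by
  simp [expSum]

@[simp]
theorem expSum_inv (j : α) (x : Raag Γ) : expSum j x⁻¹ = -expSum j x := by simp [expSum]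

@[simp]
theorem expSum_zpow_of (j v : α) (e : ℤ) :
    expSum j (of Γ v ^ e) = if v = j then e else 0 := by
  simp [expSum, expSumHom, toAdd_zpow]

theorem eq_of_zpow_of_eq_conj {m m' : α} {e e' : ℤ} {g : Raag Γ} (he : e ≠ 0)
    (h : of Γ m ^ e = g⁻¹ * of Γ m' ^ e' * g) : m' = m ∧ e' = e := by
  have hm := congrArg (expSum m) h
  simp only [expSum_mul, expSum_inv, expSum_zpow_of, if_true, neg_add_cancel_comm] at hm
  split_ifs at hm with hmm
  · exact ⟨hmm, hm.symm⟩
  · exact absurd hm he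

theorem zpow_of_inj {m m' : α} {e e' : ℤ} (he : e ≠ 0) :
    of Γ m ^ e = of Γ m' ^ e' ↔ m = m' ∧ e = e' := by
  refine ⟨fun h => ?_, fun ⟨hm, he⟩ => hm ▸ he ▸ rfl⟩
  obtain ⟨hm, he⟩ := eq_of_zpow_of_eq_conj (g := 1) he (by simpa using h)
  exact ⟨hm.symm, he.symm⟩

open ZWreathZ in
theorem expSum_eq_zero_of_commute {m j : α} (hjm : j ≠ m) (hadj : ¬Γ.Adj j m) {e : ℤ}
    (he : e ≠ 0) {g : Raag Γ} (h : Commute g (of Γ m ^ e)) : expSum j g = 0 := by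
  let f : α → ZWreathZ := fun v =>
    if v = j then ⟨1, 0⟩ else if v = m then ofShift (.ofAdd 1) else 1
  have hf : ∀ u v, Γ.Adj u v → Commute (f u) (f v) := by
    have hsupp : ∀ v, f v ≠ 1 → v = j ∨ v = m := by
      intro v hv
      by_contra! hvjm
      exact hv (by simp [f, hvjm.1, hvjm.2])
    intro u v huv
    by_cases hu : f u = 1
    · rw [hu]; exact Commute.one_left _
    by_cases hv : f v = 1
    · rw [hv]; exact Commute.one_right _
    rcases hsupp u hu with rfl | rfl <;> rcases hsupp v hv with rfl | rfl
    exacts [(huv.ne rfl).elim, (hadj huv).elim, (hadj huv.symm).elim, (huv.ne rfl).elim]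
  let ψ := lift Γ f hf
  have hψ : lampSum.comp ψ = expSumHom j := hom_ext Γ fun v => by
    by_cases hvj : v = j
    · simp [ψ, f, hvj, lampSum, expSumHom]
    · by_cases hvm : v = m
      · subst hvm
        simp [ψ, f, hjm.symm, lampSum, expSumHom, ofShift]
      · simp [ψ, f, hvj, hvm, lampSum, expSumHom, one_lamps]
  have hψm : ψ (of Γ m ^ e) = ofShift (.ofAdd e) := by
    have hfm : f m = ofShift (.ofAdd 1) := by simp [f, hjm.symm]
    rw [map_zpow, lift_of, hfm, ← map_zpow, ← ofAdd_zsmul, zsmul_one, Int.cast_id]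
  have hlamps : (ψ g).lamps = 0 := lamps_eq_zero_of_commute he (hψm ▸ h.map ψ)
  calc expSum j g = (lampSum (ψ g)).toAdd := by rw [← MonoidHom.comp_apply, hψ]; rfl
    _ = 0 := by simp [lampSum, hlamps]

end Raag

theorem Int.add_neg_two_pow_ne_zero {z : ℤ} {c : ℕ} (hz : |z| < 2 ^ c) : z + (-2) ^ c ≠ 0 := by
  intro h
  rw [eq_neg_of_add_eq_zero_left h, abs_neg, abs_pow, abs_neg, abs_two] at hz
  exact lt_irrefl _ hz

theorem Int.abs_add_neg_two_pow_lt {z : ℤ} {c : ℕ} (hz : |z| < 2 ^ c) :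
    |z + (-2) ^ c| < 2 ^ (c + 1) :=
  calc |z + (-2) ^ c| ≤ |z| + 2 ^ c := by
        simpa only [abs_pow, abs_neg, abs_two] using abs_add_le z ((-2) ^ c)
    _ < 2 ^ c + 2 ^ c := by linarith
    _ = 2 ^ (c + 1) := by ring

section UseqInvariant

open Raag Function

variable {α : Type*} [DecidableEq α] {Γ : SimpleGraph α}

def ExpSumBounded (c : α → ℕ) (g : Raag Γ) : Prop := ∀ j, |expSum j g| < 2 ^ c j

theorem expSumBounded_one (c : α → ℕ) : ExpSumBounded c (1 : Raag Γ) :=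
  fun j => by simp

theorem ExpSumBounded.mono {c c' : α → ℕ} {g : Raag Γ} (h : ExpSumBounded c g) (hc : c ≤ c') :
    ExpSumBounded c' g :=
  fun j => (h j).trans_le (pow_le_pow_right₀ (by norm_num) (hc j))

theorem ExpSumBounded.mul_zpow_of {c : α → ℕ} {g : Raag Γ} (h : ExpSumBounded c g) (j : α) :
    ExpSumBounded (update c j (c j + 1)) (g * of Γ j ^ (-2 : ℤ) ^ c j) := by
  intro i
  rcases eq_or_ne i j with rfl | hij
  · simpa using Int.abs_add_neg_two_pow_lt (h i)
  · simpa [hij, Ne.symm hij] using h i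

/-- `c m` is the number of earlier terms of the sequence that are powers of `a_m`; the next such
term is `a_m ^ (-2) ^ c m`. -/
structure UseqInvariant (U : Set (Raag Γ)) (c : α → ℕ) : Prop where
  zpow_of_mem_iff : ∀ m (e : ℤ), e ≠ 0 → (of Γ m ^ e ∈ U ↔ e = (-2) ^ c m)
  exists_conj : ∀ x ∈ U, ∃ (m : α) (e : ℤ) (g : Raag Γ),
    e ≠ 0 ∧ x = g⁻¹ * of Γ m ^ e * g ∧ ExpSumBounded c g

theorem useqInvariant_range_of : UseqInvariant (Set.range (of Γ)) 0 where
  zpow_of_mem_iff m e he := by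
    refine ⟨fun ⟨v, hv⟩ => ?_, fun h => ⟨m, by simp [h]⟩⟩
    simpa using ((zpow_of_inj he).1 (hv.symm.trans (zpow_one _).symm)).2
  exists_conj := by
    rintro _ ⟨m, rfl⟩
    exact ⟨m, 1, 1, one_ne_zero, by simp, expSumBounded_one 0⟩

namespace UseqInvariant

variable {U : Set (Raag Γ)} {c : α → ℕ}

theorem zpow_mem (h : UseqInvariant U c) (j : α) : of Γ j ^ (-2 : ℤ) ^ c j ∈ U :=
  (h.zpow_of_mem_iff j _ (pow_ne_zero _ (by norm_num))).2 rfl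

theorem mem_of_zpow_of_mem_conj (h : UseqInvariant U c) {j : α} {x : Raag Γ}
    (hx : x = of Γ j ^ (-2 : ℤ) ^ c j) {m : α} {e : ℤ} (he : e ≠ 0)
    (hmem : of Γ m ^ e ∈ (fun y => x⁻¹ * y * x) '' U) : of Γ m ^ e ∈ U := by
  obtain ⟨y, hyU, hyx : x⁻¹ * y * x = of Γ m ^ e⟩ := hmem
  obtain ⟨m', e', g, -, rfl, hg⟩ := h.exists_conj y hyU
  have hconj : of Γ m ^ e = (g * x)⁻¹ * of Γ m' ^ e' * (g * x) := by rw [← hyx]; group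
  obtain ⟨rfl, rfl⟩ := eq_of_zpow_of_eq_conj he hconj
  have hcomm : Commute (g * x) (of Γ m' ^ e') :=
    calc g * x * of Γ m' ^ e' = g * x * ((g * x)⁻¹ * of Γ m' ^ e' * (g * x)) := by
          rw [← hconj]
      _ = of Γ m' ^ e' * (g * x) := by group
  by_cases hstar : j = m' ∨ Γ.Adj j m'
  · have hxc : Commute x (of Γ m' ^ e') := by
      rcases hstar with rfl | hadj
      · rw [hx]; exact Commute.zpow_zpow_self _ _ _
      · rw [hx]; exact (commute_of_adj hadj).zpow_zpow _ _
    have hy : g⁻¹ * of Γ m' ^ e' * g = of Γ m' ^ e' :=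
      calc _ = x * (x⁻¹ * (g⁻¹ * of Γ m' ^ e' * g) * x) * x⁻¹ := by group
        _ = of Γ m' ^ e' := by rw [hyx, hxc.eq]; group
    rwa [hy] at hyU
  · push Not at hstar
    have hj := expSum_eq_zero_of_commute hstar.1 hstar.2 he hcomm
    rw [expSum_mul, hx, expSum_zpow_of, if_pos rfl] at hj
    exact absurd hj (Int.add_neg_two_pow_ne_zero (hg j))

theorem step (h : UseqInvariant U c) {j : α} {x : Raag Γ} (hx : x = of Γ j ^ (-2 : ℤ) ^ c j) :
    UseqInvariant (symmDiff (U ∪ (fun y => x⁻¹ * y * x) '' U) {x, x ^ (-2 : ℤ)})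
      (update c j (c j + 1)) := by
  have hx2 : x ^ (-2 : ℤ) = of Γ j ^ (-2 : ℤ) ^ (c j + 1) := by rw [hx, ← zpow_mul, ← pow_succ]
  refine ⟨fun m e he => ?_, fun x' hx' => ?_⟩
  · have hunion : of Γ m ^ e ∈ U ∪ (fun y => x⁻¹ * y * x) '' U ↔ e = (-2) ^ c m :=
      ⟨fun h' => (h.zpow_of_mem_iff m e he).1 (h'.elim id (h.mem_of_zpow_of_mem_conj hx he)),
        fun h' => Or.inl ((h.zpow_of_mem_iff m e he).2 h')⟩
    have hpair : of Γ m ^ e ∈ ({x, x ^ (-2 : ℤ)} : Set (Raag Γ)) ↔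
        m = j ∧ (e = (-2) ^ c j ∨ e = (-2) ^ (c j + 1)) := by
      rw [Set.mem_insert_iff, Set.mem_singleton_iff, hx2, hx, zpow_of_inj he, zpow_of_inj he,
        and_or_left]
    rw [Set.mem_symmDiff, hunion, hpair]
    rcases eq_or_ne m j with rfl | hmj
    · have hp := pow_ne_zero (c m) (by norm_num : (-2 : ℤ) ≠ 0)
      simp only [true_and, update_self, pow_succ]
      generalize (-2 : ℤ) ^ c m = p at hp ⊢
      omega
    · simp [hmj]
  · rcases Set.mem_symmDiff.1 hx' with ⟨hU | ⟨y, hyU, rfl⟩, -⟩ | ⟨hpair, -⟩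
    · obtain ⟨m, e, g, he, rfl, hg⟩ := h.exists_conj x' hU
      exact ⟨m, e, g, he, rfl, hg.mono (le_update_self_iff.2 (Nat.le_succ _))⟩
    · obtain ⟨m, e, g, he, rfl, hg⟩ := h.exists_conj y hyU
      exact ⟨m, e, g * x, he, by group, hx ▸ hg.mul_zpow_of j⟩
    · have hne (t : ℕ) : (-2 : ℤ) ^ t ≠ 0 := pow_ne_zero t (by norm_num)
      rcases hpair with rfl | rfl
      · exact ⟨j, _, 1, hne (c j), by simp [hx], expSumBounded_one _⟩
      · exact ⟨j, _, 1, hne (c j + 1), by simp [hx2], expSumBounded_one _⟩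

end UseqInvariant

end UseqInvariant

def useqVertex (n k : ℕ) : ℕ := k % (2 * n) / 2

def useqCount (n k m : ℕ) : ℕ := Nat.count (fun i => useqVertex n i = m) k

theorem useqVertex_lt {n : ℕ} (hn : 0 < n) (k : ℕ) : useqVertex n k < n := by
  have := Nat.mod_lt k (by omega : 0 < 2 * n)
  unfold useqVertex
  omega

theorem useqCount_eq {n m : ℕ} (hm : m < n) (k : ℕ) :
    useqCount n k m = 2 * (k / (2 * n)) + min (k % (2 * n) - 2 * m) 2 := by
  induction k with
  | zero => simp [useqCount]
  | succ k ih =>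
    rw [useqCount, Nat.count_succ, ← useqCount, ih, useqVertex]
    have hk := Nat.mod_add_div k (2 * n)
    have hr := Nat.mod_lt k (by omega : 0 < 2 * n)
    rcases (by omega : k % (2 * n) + 1 < 2 * n ∨ k % (2 * n) + 1 = 2 * n) with h | h
    · obtain ⟨hdiv, hmod⟩ : (k + 1) / (2 * n) = k / (2 * n) ∧
          (k + 1) % (2 * n) = k % (2 * n) + 1 :=
        (Nat.div_mod_unique (by omega)).2 ⟨by omega, h⟩
      rw [hdiv, hmod]
      split_ifs <;> omega
    · obtain ⟨hdiv, hmod⟩ : (k + 1) / (2 * n) = k / (2 * n) + 1 ∧ (k + 1) % (2 * n) = 0 :=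
        (Nat.div_mod_unique (by omega)).2 ⟨by rw [Nat.mul_add]; omega, by omega⟩
      rw [hdiv, hmod]
      split_ifs <;> omega

section UniversalSequence

variable {n : ℕ} {Γ : SimpleGraph (Fin n)} {u : ℕ → Raag Γ} {U : ℕ → Set (Raag Γ)}

theorem IsUniversalSequence.eq_zpow (huU : IsUniversalSequence Γ u U) (hn : 0 < n) (k : ℕ) :
    u k = Raag.of Γ ⟨useqVertex n k, useqVertex_lt hn k⟩ ^
      (-2 : ℤ) ^ useqCount n k (useqVertex n k) := by
  have hk := Nat.mod_add_div k (2 * n)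
  have hr := Nat.mod_lt k (by omega : 0 < 2 * n)
  have hcount : useqCount n k (useqVertex n k) = 2 * (k / (2 * n)) + k % (2 * n) % 2 := by
    rw [useqCount_eq (useqVertex_lt hn k), useqVertex]
    omega
  rw [hcount, pow_add, pow_mul]
  rcases Nat.mod_two_eq_zero_or_one (k % (2 * n)) with h | h
  · have hu := huU.1 (k / (2 * n)) ⟨useqVertex n k, useqVertex_lt hn k⟩
    rw [show 2 * n * (k / (2 * n)) + 2 * useqVertex n k = k by unfold useqVertex; omega] at hu
    rw [hu, h]
    ring_nf
  · have hu := huU.2.1 (k / (2 * n)) ⟨useqVertex n k, useqVertex_lt hn k⟩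
    rw [show 2 * n * (k / (2 * n)) + 2 * useqVertex n k + 1 = k by unfold useqVertex; omega]
      at hu
    rw [hu, h]
    ring_nf

end UniversalSequence

/-- for every `k`, `u_k ∈ U_k` in the universal sequence. -/
theorem useq_mem {n : ℕ} (hn : 0 < n) (Γ : SimpleGraph (Fin n))
    (u : ℕ → Raag Γ) (U : ℕ → Set (Raag Γ))
    (huU : IsUniversalSequence Γ u U) :
    ∀ k, u k ∈ U k := by
  let c (k : ℕ) (m : Fin n) : ℕ := useqCount n k m
  have hc : ∀ k, c (k + 1) = Function.update (c k) ⟨useqVertex n k, useqVertex_lt hn k⟩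
      (c k ⟨useqVertex n k, useqVertex_lt hn k⟩ + 1) := by
    intro k
    funext m
    rcases eq_or_ne m ⟨useqVertex n k, useqVertex_lt hn k⟩ with rfl | hm
    · simp [c, useqCount, Nat.count_succ]
    · simp [c, useqCount, Nat.count_succ, hm, Ne.symm (Fin.val_ne_of_ne hm)]
  have hinv : ∀ k, UseqInvariant (U k) (c k) := by
    intro k
    induction k with
    | zero =>
      rw [huU.2.2.1, show c 0 = 0 from funext fun m => Nat.count_zero _]
      exact useqInvariant_range_of
    | succ k ih => rw [huU.2.2.2 k, hc]; exact ih.step (huU.eq_zpow hn k)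
  intro k
  rw [huU.eq_zpow hn k]
  exact (hinv k).zpow_mem _
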